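/- For every integer N ≥ 1, every integer n ≥ 0, and every real x ≠ 0, Σ_{l=0}^{n} (-1)^{n-l} · C(N+n-l, n-l) · W_l^{(N+1)}(x) = (1/(2^N · N!)) · Σ_{i=1}^{N} Σ_{l=0}^{i} (-1)^{i-l} · a(i,N) · (i!/l!) · Σ_{(m,s,p): m+s+p=n} (-1)^s · C(2N+m-i-1, m) · C(i-l+s, s) · (p+l)_l · x^{i-2N-m} · W_{p+l}(x), where the inner sum is over all triples (m,s,p) of nonnegative integers with m+s+p = n and x^{i-2N-m} is an integer (possibly negative) power of x. -/

import Mathlib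

/-!
Put `g = D⁻¹`, `u = x - t`, and let `W = (1+t) g` be the generating function of the `W_n(x)`;
then `g' = 2 u g²` and `u' = -1`. The recursion defining `a(i,N)` is exactly what carries the
identity `∑_{i=1}^N a(i,N) uⁱ g⁽ⁱ⁾ = 2^N N! u^{2N} g^{N+1}` from `N` to `N + 1` under the operator
`f ↦ u f' + 2N f`. Both sides of the theorem are the `n`-th coefficient of `g^{N+1}`: the left side
because `g^{N+1} = W^{N+1} (1+t)^{-(N+1)}`, the right side after dividing that identity by
`u^{2N}`, expanding `g⁽ⁱ⁾ = (W (1+t)⁻¹)⁽ⁱ⁾` by Leibniz' rule and reading off the coefficients of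
the negative binomial series `u^{-(2N-i)}` and `(1+t)^{-(i-l+1)}`.
-/

/-- The falling factorial `(y)_k = y(y-1)⋯(y-k+1)` of a real number, `(y)_0 = 1`. -/
noncomputable def fallingFactorial (y : ℝ) (k : ℕ) : ℝ :=
  ∏ j ∈ Finset.range k, (y - (j : ℝ))

/-- `D = 1 - 2x·t + t²` as a formal power series in `t` over `ℝ`. -/
noncomputable def Dser (x : ℝ) : PowerSeries ℝ :=
  1 - PowerSeries.C (2 * x) * PowerSeries.X + PowerSeries.X ^ 2

/-- The higher-order Chebyshev polynomial of the fourth kind `W_n^{(α)}(x)`,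
the `n`-th coefficient of `((1+t)·D⁻¹)^α`. -/
noncomputable def chebW (x : ℝ) (α n : ℕ) : ℝ :=
  PowerSeries.coeff n (((1 + PowerSeries.X) * (Dser x)⁻¹) ^ α)

open PowerSeries Finset Nat

structure IsARecursion {R : Type*} [CommRing R] (a : ℕ → ℕ → R) : Prop where
  one_succ : ∀ N : ℕ, 1 ≤ N → a 1 (N + 1) = (2 * N - 1) * a 1 N
  succ_succ : ∀ N : ℕ, 1 ≤ N → a (N + 1) (N + 1) = a N N
  succ : ∀ N i : ℕ, 2 ≤ i → i ≤ N → a i (N + 1) = a (i - 1) N + (2 * N - i) * a i N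

theorem IsARecursion.sum_range_succ_smul {R M : Type*} [CommRing R] [AddCommGroup M] [Module R M]
    {a : ℕ → ℕ → R} (ha : IsARecursion a) (T : ℕ → M) {N : ℕ} (hN : 1 ≤ N) :
    ∑ j ∈ range (N + 1), a (j + 1) (N + 1) • T (j + 1) =
      ∑ j ∈ range N, a (j + 1) N • ((2 * N - (j + 1) : R) • T (j + 1) + T (j + 2)) := by
  obtain ⟨N, rfl⟩ : ∃ K, N = K + 1 := ⟨N - 1, by omega⟩
  have hmid : ∀ j ∈ range N, a (j + 2) (N + 2) • T (j + 2) =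
      a (j + 2) (N + 1) • ((2 * (N + 1 : ℕ) - (j + 1 + 1) : R) • T (j + 2))
        + a (j + 1) (N + 1) • T (j + 2) := fun j hj => by
    rw [ha.succ (N + 1) (j + 2) (by omega) (by simpa using hj)]
    push_cast
    module
  simp only [smul_add, sum_add_distrib]
  rw [sum_range_succ', sum_range_succ, sum_congr rfl hmid, sum_add_distrib,
    sum_range_succ' (fun j => a (j + 1) (N + 1) • _),
    sum_range_succ (fun j => a (j + 1) (N + 1) • T (j + 2)),
    ha.succ_succ (N + 1) (by omega), ha.one_succ (N + 1) (by omega)]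
  push_cast
  module

namespace Derivation

section Semiring

variable {R A : Type*} [CommSemiring R] [CommSemiring A] [Algebra R A] (D : Derivation R A A)

theorem iterate_leibniz (n : ℕ) (a b : A) :
    D^[n] (a * b) = ∑ ij ∈ antidiagonal n, n.choose ij.1 • (D^[ij.1] a * D^[ij.2] b) := by
  induction n with
  | zero => simp
  | succ n ih =>
    rw [sum_antidiagonal_choose_succ_nsmul (fun i j => D^[i] a * D^[j] b) n]
    simp only [Function.iterate_succ_apply', ih, map_sum, map_nsmul, leibniz, smul_eq_mul,
      smul_add, sum_add_distrib]
    congr 1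
    refine sum_congr rfl fun ⟨i, j⟩ hij => ?_
    rw [n.choose_symm_of_eq_add (mem_antidiagonal.1 hij).symm, mul_comm]

end Semiring

section Ring

variable {R A : Type*} [CommRing R] [CommRing A] [Algebra R A] (D : Derivation R A A) {u g : A}

theorem mul_apply_pow_mul (hu : D u = -1) (k : ℕ) (h : A) :
    u * D (u ^ k * h) = u ^ (k + 1) * D h - k • (u ^ k * h) := by
  rcases k with _ | k
  · simp
  · rw [leibniz, leibniz_pow, hu]
    simp only [smul_eq_mul, nsmul_eq_mul, add_tsub_cancel_right]
    ring

theorem mul_apply_pow_mul_pow (hu : D u = -1) (hg : D g = 2 * u * g ^ 2) (N : ℕ) :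
    u * D (u ^ (2 * N) * g ^ (N + 1)) + (2 * N) • (u ^ (2 * N) * g ^ (N + 1)) =
      (2 * (N + 1)) • (u ^ (2 * (N + 1)) * g ^ (N + 2)) := by
  rw [mul_apply_pow_mul D hu, leibniz_pow, hg]
  simp only [smul_eq_mul, nsmul_eq_mul, add_tsub_cancel_right]
  push_cast
  ring

theorem sum_smul_pow_mul_iterate {a : ℕ → ℕ → R} (ha : IsARecursion a) (h11 : a 1 1 = 1)
    (hu : D u = -1) (hg : D g = 2 * u * g ^ 2) {N : ℕ} (hN : 1 ≤ N) :
    ∑ j ∈ range N, a (j + 1) N • (u ^ (j + 1) * D^[j + 1] g) =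
      ((2 : R) ^ N * N !) • (u ^ (2 * N) * g ^ (N + 1)) := by
  induction N, hN using Nat.le_induction with
  | base =>
    rw [sum_range_one, h11, one_smul, Function.iterate_one, hg]
    simp only [pow_one, factorial_one, cast_one, mul_one, two_smul]
    ring
  | succ N hN ih =>
    calc ∑ j ∈ range (N + 1), a (j + 1) (N + 1) • (u ^ (j + 1) * D^[j + 1] g)
        = ∑ j ∈ range N, a (j + 1) N • ((2 * N - (j + 1) : R) • (u ^ (j + 1) * D^[j + 1] g)
            + u ^ (j + 2) * D^[j + 2] g) :=
          ha.sum_range_succ_smul (fun i => u ^ i * D^[i] g) hN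
      _ = u * D (∑ j ∈ range N, a (j + 1) N • (u ^ (j + 1) * D^[j + 1] g))
            + (2 * N) • ∑ j ∈ range N, a (j + 1) N • (u ^ (j + 1) * D^[j + 1] g) := by
        simp only [map_sum, map_smul, mul_sum, smul_sum, ← sum_add_distrib, mul_smul_comm,
          mul_apply_pow_mul D hu, ← Function.iterate_succ_apply' D]
        refine sum_congr rfl fun j _ => ?_
        module
      _ = ((2 : R) ^ (N + 1) * (N + 1)!) • (u ^ (2 * (N + 1)) * g ^ (N + 1 + 1)) := by
        rw [ih, map_smul, mul_smul_comm, smul_comm (2 * N), ← smul_add,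
          mul_apply_pow_mul_pow D hu hg, factorial_succ]
        push_cast
        module

end Ring

end Derivation

theorem coeff_mul_mul_eq_sum_sum {R : Type*} [CommSemiring R] (f g h : R⟦X⟧) (n : ℕ) :
    coeff n (f * (g * h)) = ∑ m ∈ range (n + 1), ∑ s ∈ range (n + 1 - m),
      coeff m f * coeff s g * coeff (n - m - s) h := by
  rw [coeff_mul, Nat.sum_antidiagonal_eq_sum_range_succ (fun m j => coeff m f * coeff j (g * h))]
  refine sum_congr rfl fun m hm => ?_
  rw [coeff_mul, Nat.sum_antidiagonal_eq_sum_range_succ (fun s j => coeff s g * coeff j h),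
    mul_sum, show n + 1 - m = n - m + 1 by simp at hm; omega]
  exact sum_congr rfl fun s _ => (mul_assoc _ _ _).symm

section Field

variable {K : Type*} [Field K]

theorem coeff_inv_one_sub_C_mul_X_pow (r : K) (k m : ℕ) :
    coeff m ((1 - C r * X)⁻¹ ^ (k + 1)) = (k + m).choose m * r ^ m := by
  have hr : constantCoeff (1 - C r * X : K⟦X⟧) ≠ 0 := by simp
  have hpow : (1 - C r * X : K⟦X⟧) ^ (k + 1) ≠ 0 := pow_ne_zero _ fun h => hr (by simp [h])
  have h : (1 - C r * X : K⟦X⟧)⁻¹ ^ (k + 1) = rescale r (mk fun n => ((k + n).choose k : K)) := by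
    apply mul_right_cancel₀ hpow
    rw [← mul_pow, PowerSeries.inv_mul_cancel _ hr, one_pow, ← rescale_X, ← map_one (rescale r),
      ← map_sub, ← map_pow, ← map_mul, mk_add_choose_mul_one_sub_pow_eq_one, map_one]
  rw [h, coeff_rescale, coeff_mk, Nat.choose_symm_add, mul_comm]

theorem coeff_inv_C_sub_X_pow {x : K} (hx : x ≠ 0) (k m : ℕ) :
    coeff m ((C x - X)⁻¹ ^ (k + 1)) = (k + m).choose m * x⁻¹ ^ (k + 1 + m) := by
  have hx' : constantCoeff (1 - C x⁻¹ * X : K⟦X⟧) ≠ 0 := by simp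
  have h : (C x - X : K⟦X⟧)⁻¹ = C x⁻¹ * (1 - C x⁻¹ * X)⁻¹ := by
    rw [PowerSeries.inv_eq_iff_mul_eq_one (by simpa using hx)]
    have hfac : (C x - X : K⟦X⟧) = C x * (1 - C x⁻¹ * X) := by
      rw [mul_sub, ← mul_assoc, ← map_mul, mul_inv_cancel₀ hx, map_one, mul_one, one_mul]
    rw [hfac, mul_mul_mul_comm, ← map_mul, inv_mul_cancel₀ hx, map_one, one_mul,
      PowerSeries.inv_mul_cancel _ hx']
  rw [h, mul_pow, ← map_pow, coeff_C_mul, coeff_inv_one_sub_C_mul_X_pow, pow_add]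
  ring

theorem coeff_inv_one_add_X_pow (k m : ℕ) :
    coeff m ((1 + X : K⟦X⟧)⁻¹ ^ (k + 1)) = (-1) ^ m * (k + m).choose m := by
  have h : (1 + X : K⟦X⟧) = 1 - C (-1) * X := by simp
  rw [h, coeff_inv_one_sub_C_mul_X_pow, mul_comm]

theorem iterate_derivative_inv_one_sub_C_mul_X (r : K) (k : ℕ) :
    (d⁄dX K)^[k] (1 - C r * X)⁻¹ = (k ! * r ^ k : K) • (1 - C r * X)⁻¹ ^ (k + 1) := by
  ext p
  have h := coeff_inv_one_sub_C_mul_X_pow r 0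
  simp only [pow_one, zero_add, choose_self, cast_one, one_mul] at h
  rw [coeff_iterate_derivative, h, coeff_smul, coeff_inv_one_sub_C_mul_X_pow, smul_eq_mul,
    ascFactorial_eq_factorial_mul_choose, add_comm p k, Nat.choose_symm_add]
  push_cast
  ring

theorem sum_neg_one_pow_mul_choose_mul_coeff (F : K⟦X⟧) (N n : ℕ) :
    ∑ l ∈ range (n + 1), (-1) ^ (n - l) * ((N + n - l).choose (n - l) : K) * coeff l F =
      coeff n (F * (1 + X)⁻¹ ^ (N + 1)) := by
  rw [coeff_mul, Nat.sum_antidiagonal_eq_sum_range_succ (fun l j => coeff l F * coeff j _)]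
  refine sum_congr rfl fun l hl => ?_
  rw [coeff_inv_one_add_X_pow, Nat.add_sub_assoc (by simp at hl; omega)]
  ring

theorem iterate_derivative_mul_inv_one_add_X [CharZero K] (f : K⟦X⟧) (i : ℕ) :
    (d⁄dX K)^[i] (f * (1 + X)⁻¹) = ∑ l ∈ range (i + 1),
      ((-1) ^ (i - l) * (i ! / l ! : K)) • ((1 + X)⁻¹ ^ (i - l + 1) * (d⁄dX K)^[l] f) := by
  have h : (1 + X : K⟦X⟧) = 1 - C (-1) * X := by simp
  rw [Derivation.iterate_leibniz, Nat.sum_antidiagonal_eq_sum_range_succ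
    (fun l j => i.choose l • ((d⁄dX K)^[l] f * (d⁄dX K)^[j] (1 + X)⁻¹))]
  refine sum_congr rfl fun l hl => ?_
  have hl : l ≤ i := by simp at hl; omega
  rw [h, iterate_derivative_inv_one_sub_C_mul_X, ← h, mul_smul_comm, ← Nat.cast_smul_eq_nsmul K,
    smul_smul, mul_comm ((d⁄dX K)^[l] f), Nat.cast_choose K hl]
  congr 1
  have : ((i - l)! : K) ≠ 0 := Nat.cast_ne_zero.mpr (factorial_ne_zero _)
  field_simp

theorem sum_mul_coeff_inv_pow_mul_iterate_derivative {a : ℕ → ℕ → K} (ha : IsARecursion a)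
    (h11 : a 1 1 = 1) {u g : K⟦X⟧} (hu0 : constantCoeff u ≠ 0) (hu : d⁄dX K u = -1)
    (hg : d⁄dX K g = 2 * u * g ^ 2) {N : ℕ} (hN : 1 ≤ N) (n : ℕ) :
    ∑ i ∈ Icc 1 N, a i N * coeff n (u⁻¹ ^ (2 * N - i) * (d⁄dX K)^[i] g) =
      2 ^ N * N ! * coeff n (g ^ (N + 1)) := by
  have hu' : u⁻¹ * u = 1 := PowerSeries.inv_mul_cancel _ hu0
  have hpow : ∀ k i, u⁻¹ ^ (k + i) * u ^ i = u⁻¹ ^ k := fun k i => by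
    rw [pow_add, mul_assoc, ← mul_pow, hu', one_pow, mul_one]
  calc ∑ i ∈ Icc 1 N, a i N * coeff n (u⁻¹ ^ (2 * N - i) * (d⁄dX K)^[i] g)
      = ∑ j ∈ range N, a (j + 1) N * coeff n (u⁻¹ ^ (2 * N - (j + 1)) * (d⁄dX K)^[j + 1] g) := by
        rw [range_eq_Ico,
          sum_Ico_add' (fun i => a i N * coeff n (u⁻¹ ^ (2 * N - i) * (d⁄dX K)^[i] g)),
          zero_add, Ico_add_one_right_eq_Icc]
    _ = coeff n (u⁻¹ ^ (2 * N) *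
          ∑ j ∈ range N, a (j + 1) N • (u ^ (j + 1) * (d⁄dX K)^[j + 1] g)) := by
        rw [mul_sum, map_sum]
        refine sum_congr rfl fun j hj => ?_
        rw [mul_smul_comm, coeff_smul, smul_eq_mul, ← mul_assoc, ← hpow (2 * N - (j + 1)) (j + 1),
          Nat.sub_add_cancel (by simp at hj; omega)]
    _ = 2 ^ N * N ! * coeff n (g ^ (N + 1)) := by
        rw [(d⁄dX K).sum_smul_pow_mul_iterate ha h11 hu hg hN, mul_smul_comm, coeff_smul,
          smul_eq_mul, ← mul_assoc, ← mul_pow, hu', one_pow, one_mul]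

end Field

theorem derivative_C_sub_X (x : ℝ) : d⁄dX ℝ (C x - X) = -1 := by
  simp

theorem derivative_Dser (x : ℝ) : d⁄dX ℝ (Dser x) = -2 * (C x - X) := by
  simp only [Dser, map_add, map_sub, Derivation.map_one_eq_zero, Derivation.leibniz,
    Derivation.leibniz_pow, derivative_X, derivative_C, smul_eq_mul, nsmul_eq_mul]
  rw [map_mul, map_ofNat]
  ring

theorem derivative_inv_Dser (x : ℝ) : d⁄dX ℝ (Dser x)⁻¹ = 2 * (C x - X) * (Dser x)⁻¹ ^ 2 := by
  rw [derivative_inv', derivative_Dser]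
  ring

theorem fallingFactorial_natCast_add_self (p l : ℕ) :
    fallingFactorial ((p : ℝ) + l) l = (p + 1).ascFactorial l := by
  rw [fallingFactorial, ← descPochhammer_eval_eq_prod_range, ← Nat.cast_add,
    descPochhammer_eval_eq_descFactorial, add_descFactorial_eq_ascFactorial]

theorem coeff_iterate_derivative_eq_fallingFactorial (f : ℝ⟦X⟧) (p l : ℕ) :
    coeff p ((d⁄dX ℝ)^[l] f) = fallingFactorial ((p : ℝ) + l) l * coeff (p + l) f := by
  rw [coeff_iterate_derivative, fallingFactorial_natCast_add_self]

theorem coeff_inv_C_sub_X_pow_mul_iterate_derivative {x : ℝ} (hx : x ≠ 0) (W : ℝ⟦X⟧)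
    (k i n : ℕ) :
    coeff n ((C x - X)⁻¹ ^ (k + 1) * (d⁄dX ℝ)^[i] (W * (1 + X)⁻¹)) =
      ∑ l ∈ range (i + 1), (-1) ^ (i - l) * (i ! / l ! : ℝ) *
        ∑ m ∈ range (n + 1), ∑ s ∈ range (n + 1 - m),
          (-1) ^ s * ((k + m).choose m : ℝ) * ((i - l + s).choose s : ℝ) *
            fallingFactorial ((n - m - s : ℕ) + l) l * x⁻¹ ^ (k + 1 + m) *
            coeff (n - m - s + l) W := by
  rw [iterate_derivative_mul_inv_one_add_X, mul_sum, map_sum]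
  refine sum_congr rfl fun l _ => ?_
  rw [mul_smul_comm, coeff_smul, smul_eq_mul, coeff_mul_mul_eq_sum_sum]
  congr 1
  refine sum_congr rfl fun m _ => sum_congr rfl fun s _ => ?_
  rw [coeff_inv_C_sub_X_pow hx, coeff_inv_one_add_X_pow,
    coeff_iterate_derivative_eq_fallingFactorial]
  ring

/-- for `N ≥ 1`, `n ≥ 0` and real `x ≠ 0`,
`Σ_{l=0}^n (-1)^{n-l} C(N+n-l, n-l) W_l^{(N+1)}(x) = (1/(2^N N!)) Σ_{i=1}^N
  Σ_{l=0}^i (-1)^{i-l} a(i,N) (i!/l!) Σ_{m+s+p=n} (-1)^s C(2N+m-i-1, m)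
  C(i-l+s, s) (p+l)_l x^{i-2N-m} W_{p+l}(x)`, where the inner sum over triples
`(m,s,p)` of nonnegative integers with `m+s+p = n` is realized as a double sum
over `m ≤ n`, `s ≤ n - m` with `p = n - m - s`, and `a` is the family defined
by the recursion `a(1,1) = 1`, `a(1,N+1) = (2N-1)a(1,N)`,
`a(N+1,N+1) = a(N,N)`, `a(i,N+1) = a(i-1,N) + (2N-i)a(i,N)` for `2 ≤ i ≤ N`. -/
theorem stmt9
    (a : ℕ → ℕ → ℝ)
    (ha11 : a 1 1 = 1)
    (ha1 : ∀ N : ℕ, 1 ≤ N → a 1 (N + 1) = (2 * (N : ℝ) - 1) * a 1 N)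
    (hadiag : ∀ N : ℕ, 1 ≤ N → a (N + 1) (N + 1) = a N N)
    (harec : ∀ N i : ℕ, 2 ≤ i → i ≤ N →
      a i (N + 1) = a (i - 1) N + (2 * (N : ℝ) - (i : ℝ)) * a i N)
    (x : ℝ) (hx : x ≠ 0) (N n : ℕ) (hN : 1 ≤ N) :
    ∑ l ∈ Finset.range (n + 1),
        (-1 : ℝ) ^ (n - l) * (Nat.choose (N + n - l) (n - l) : ℝ) * chebW x (N + 1) l =
      (1 / (2 ^ N * (Nat.factorial N : ℝ))) *
        ∑ i ∈ Finset.Icc 1 N, ∑ l ∈ Finset.range (i + 1),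
          (-1 : ℝ) ^ (i - l) * a i N * ((Nat.factorial i : ℝ) / (Nat.factorial l : ℝ)) *
            ∑ m ∈ Finset.range (n + 1), ∑ s ∈ Finset.range (n + 1 - m),
              (-1 : ℝ) ^ s * (Nat.choose (2 * N + m - i - 1) m : ℝ) *
                (Nat.choose (i - l + s) s : ℝ) *
                fallingFactorial (((n - m - s : ℕ) : ℝ) + (l : ℝ)) l *
                x ^ ((i : ℤ) - 2 * (N : ℤ) - (m : ℤ)) *
                chebW x 1 ((n - m - s) + l) := by
  simp only [chebW, pow_one]
  have hsum := sum_mul_coeff_inv_pow_mul_iterate_derivative ⟨ha1, hadiag, harec⟩ ha11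
    (by simpa using hx) (derivative_C_sub_X x) (derivative_inv_Dser x) hN n
  set g := (Dser x)⁻¹
  set W := (1 + X) * g with hW
  have hg : g = W * (1 + X)⁻¹ := by
    rw [hW, mul_comm (1 + X), mul_assoc, PowerSeries.mul_inv_cancel _ (by simp), mul_one]
  have hterm : ∀ i ∈ Icc 1 N, ∑ l ∈ range (i + 1),
      (-1 : ℝ) ^ (i - l) * a i N * (i ! / l ! : ℝ) *
        ∑ m ∈ range (n + 1), ∑ s ∈ range (n + 1 - m),
          (-1 : ℝ) ^ s * ((2 * N + m - i - 1).choose m : ℝ) * ((i - l + s).choose s : ℝ) *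
            fallingFactorial ((n - m - s : ℕ) + l) l * x ^ ((i : ℤ) - 2 * N - m) *
            coeff (n - m - s + l) W =
      a i N * coeff n ((C x - X)⁻¹ ^ (2 * N - i) * (d⁄dX ℝ)^[i] g) := by
    intro i hi
    obtain ⟨k, hk⟩ : ∃ k, 2 * N - i = k + 1 := ⟨2 * N - i - 1, by simp at hi; omega⟩
    rw [hk, hg, coeff_inv_C_sub_X_pow_mul_iterate_derivative hx, mul_sum]
    refine sum_congr rfl fun l _ => ?_
    rw [mul_comm ((-1 : ℝ) ^ (i - l)) (a i N), mul_assoc (a i N), mul_assoc (a i N)]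
    congr 2
    refine sum_congr rfl fun m _ => sum_congr rfl fun s _ => ?_
    rw [show 2 * N + m - i - 1 = k + m by omega,
      show (i : ℤ) - 2 * N - m = -((k + 1 + m : ℕ) : ℤ) by omega, zpow_neg, zpow_natCast, inv_pow]
  rw [sum_neg_one_pow_mul_choose_mul_coeff, ← mul_pow, ← hg, sum_congr rfl hterm, hsum]
  field_simp
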